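/- Let L be a finite-dimensional monolithic Lie algebra with monolith A (unique minimal ideal) such that L/A is solvable and L is not solvable. Then the solvable radical of L does not contain A, the Frattini ideal φ(L) is zero, and there exists a maximal subalgebra M of L with L = M + A. -/

import Mathlib

/-- `M` is a maximal (proper) subalgebra of `L`. -/
def IsMaximalSubalgebra {F : Type*} [Field F] {L : Type*} [LieRing L] [LieAlgebra F L]
    (M : LieSubalgebra F L) : Prop :=
  M ≠ ⊤ ∧ ∀ K : LieSubalgebra F L, M < K → K = ⊤

/-- `C/D` is a chief factor of `L`: `D < C` are ideals of `L` and there is no ideal of `L`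
strictly between them (equivalently, `C/D` is a minimal nonzero ideal of `L/D`). -/
def IsChiefFactor {F : Type*} [Field F] {L : Type*} [LieRing L] [LieAlgebra F L]
    (D C : LieIdeal F L) : Prop :=
  D < C ∧ ∀ K : LieIdeal F L, D ≤ K → K ≤ C → K = D ∨ K = C

/-- The subquotient `S/(S ∩ D)`, as a Lie algebra; when `D ⊆ S` this is `S/D`. -/
abbrev SubQuot {F : Type*} [Field F] {L : Type*} [LieRing L] [LieAlgebra F L]
    (S : LieSubalgebra F L) (D : LieIdeal F L) :=
  S ⧸ LieIdeal.comap S.incl D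

/-- The core `M_L` of a subalgebra `M`: the largest ideal of `L` contained in `M`. -/
def coreOf {F : Type*} [Field F] {L : Type*} [LieRing L] [LieAlgebra F L]
    (M : LieSubalgebra F L) : LieIdeal F L :=
  sSup {I : LieIdeal F L | (I : Set L) ⊆ M}

/-- The Frattini ideal of `L`: the largest ideal of `L` contained in every maximal
subalgebra of `L`. -/
def frattiniIdeal (F : Type*) [Field F] (L : Type*) [LieRing L] [LieAlgebra F L] :
    LieIdeal F L :=
  sSup {I : LieIdeal F L | ∀ M : LieSubalgebra F L, IsMaximalSubalgebra M → (I : Set L) ⊆ M}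

/-!
The Frattini ideal is nilpotent: for `x ∈ φ(L)`, Fitting's decomposition of `ad x` gives
`L = ker (ad x)ⁿ + im (ad x)ⁿ ⊆ engel x + φ(L)`, and since `φ(L)` consists of non-generators,
`engel x = L`; Engel's theorem then applies. Hence `φ(L)` lies in the radical. The radical
cannot contain the monolith `A`, for then `L` would be an extension of the solvable `L/A` by the
solvable `A`; so `φ(L)`, which would otherwise contain `A`, is zero. Then some maximal subalgebra
`M` misses `A`, and as `M + A` is a subalgebra strictly above `M`, it is all of `L`.
-/

namespace LieIdeal

variable {R L : Type*} [CommRing R] [LieRing L] [LieAlgebra R L]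

def quotientMk (I : LieIdeal R L) : L →ₗ⁅R⁆ L ⧸ I :=
  { I.toSubmodule.mkQ with
    map_lie' := fun {x y} => LieSubmodule.Quotient.mk_bracket I x y }

lemma quotientMk_surjective (I : LieIdeal R L) : Function.Surjective I.quotientMk :=
  Submodule.Quotient.mk_surjective _

@[simp]
lemma ker_quotientMk (I : LieIdeal R L) : I.quotientMk.ker = I := by
  ext y
  exact Submodule.Quotient.mk_eq_zero I.toSubmodule

end LieIdeal

namespace LieAlgebra

variable {R L : Type*} [CommRing R] [LieRing L] [LieAlgebra R L]

theorem isSolvable_of_isSolvable_ideal_of_isSolvable_quotient (I : LieIdeal R L)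
    [IsSolvable I] [IsSolvable (L ⧸ I)] : IsSolvable L := by
  obtain ⟨k, hk⟩ := IsSolvable.solvable R I
  obtain ⟨n, hn⟩ := IsSolvable.solvable R (L ⧸ I)
  have hle : derivedSeries R L n ≤ I := by
    rw [← I.ker_quotientMk, ← LieIdeal.map_eq_bot_iff,
      LieIdeal.derivedSeries_map_eq n I.quotientMk_surjective, hn]
  rw [LieIdeal.derivedSeries_eq_bot_iff] at hk
  refine IsSolvable.mk (R := R) (k := k + n) ?_
  rw [derivedSeries_def, derivedSeriesOfIdeal_add, ← le_bot_iff, ← hk]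
  exact derivedSeriesOfIdeal_mono hle k

end LieAlgebra

namespace LieSubalgebra

variable {R L : Type*} [CommRing R] [LieRing L] [LieAlgebra R L]

def supIdeal (M : LieSubalgebra R L) (I : LieIdeal R L) : LieSubalgebra R L where
  toSubmodule := M.toSubmodule ⊔ I.toSubmodule
  lie_mem' {x y} hx hy := by
    obtain ⟨m, hm, a, ha, rfl⟩ := Submodule.mem_sup.mp hx
    obtain ⟨m', hm', a', ha', rfl⟩ := Submodule.mem_sup.mp hy
    rw [add_lie, lie_add, add_assoc]
    exact Submodule.add_mem_sup (M.lie_mem hm hm')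
      (add_mem (lie_mem_right R L I m a' ha') (lie_mem_left R L I a _ ha))

lemma le_supIdeal (M : LieSubalgebra R L) (I : LieIdeal R L) : M ≤ M.supIdeal I :=
  fun _ hx => Submodule.mem_sup_left hx

lemma mem_supIdeal_of_mem_ideal (M : LieSubalgebra R L) {I : LieIdeal R L} {x : L}
    (hx : x ∈ I) : x ∈ M.supIdeal I :=
  Submodule.mem_sup_right hx

end LieSubalgebra

section Frattini

variable {F L : Type*} [Field F] [LieRing L] [LieAlgebra F L]

lemma IsMaximalSubalgebra.toSubmodule_sup_eq_top {M : LieSubalgebra F L}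
    (hM : IsMaximalSubalgebra M) {I : LieIdeal F L} (hI : ¬ (I : Set L) ⊆ M) :
    M.toSubmodule ⊔ I.toSubmodule = ⊤ := by
  obtain ⟨x, hxI, hxM⟩ := Set.not_subset.mp hI
  have hlt : M < M.supIdeal I :=
    lt_of_le_of_ne (M.le_supIdeal I) fun h => hxM (h ▸ M.mem_supIdeal_of_mem_ideal hxI)
  exact congrArg LieSubalgebra.toSubmodule (hM.2 _ hlt)

lemma exists_isMaximalSubalgebra_le [FiniteDimensional F L] {K : LieSubalgebra F L}
    (hK : K ≠ ⊤) : ∃ M, IsMaximalSubalgebra M ∧ K ≤ M :=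
  (eq_top_or_exists_le_coatom K).resolve_left hK

lemma frattiniIdeal_le_of_isMaximalSubalgebra {M : LieSubalgebra F L}
    (hM : IsMaximalSubalgebra M) : (frattiniIdeal F L).toSubmodule ≤ M.toSubmodule := by
  rw [frattiniIdeal, LieSubmodule.sSup_toSubmodule]
  exact sSup_le fun _ ⟨I, hI, hIeq⟩ => hIeq ▸ hI M hM

lemma le_frattiniIdeal {I : LieIdeal F L}
    (h : ∀ M : LieSubalgebra F L, IsMaximalSubalgebra M → (I : Set L) ⊆ M) :
    I ≤ frattiniIdeal F L :=
  le_sSup h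

lemma eq_top_of_toSubmodule_sup_frattiniIdeal_eq_top [FiniteDimensional F L]
    {K : LieSubalgebra F L} (h : K.toSubmodule ⊔ (frattiniIdeal F L).toSubmodule = ⊤) :
    K = ⊤ := by
  by_contra hK
  obtain ⟨M, hM, hKM⟩ := exists_isMaximalSubalgebra_le hK
  refine hM.1 (LieSubalgebra.toSubmodule_injective (top_unique ?_))
  exact h ▸ sup_le hKM (frattiniIdeal_le_of_isMaximalSubalgebra hM)

lemma engel_eq_top_of_mem_frattiniIdeal [FiniteDimensional F L] {x : L}
    (hx : x ∈ frattiniIdeal F L) : LieSubalgebra.engel F x = ⊤ := by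
  set f := LieAlgebra.ad F L x
  obtain ⟨N, hN⟩ := Filter.eventually_atTop.mp f.eventually_codisjoint_ker_pow_range_pow
  have hker : LinearMap.ker (f ^ (N + 1)) ≤ (LieSubalgebra.engel F x).toSubmodule :=
    fun y hy => (LieSubalgebra.mem_engel_iff F x y).mpr ⟨N + 1, hy⟩
  have hrange : LinearMap.range (f ^ (N + 1)) ≤ (frattiniIdeal F L).toSubmodule := by
    rintro _ ⟨y, rfl⟩
    rw [pow_succ', Module.End.mul_apply]
    exact lie_mem_left F L _ x _ hx
  apply eq_top_of_toSubmodule_sup_frattiniIdeal_eq_top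
  exact top_unique ((hN (N + 1) N.le_succ).eq_top.ge.trans (sup_le_sup hker hrange))

lemma isNilpotent_frattiniIdeal [FiniteDimensional F L] :
    LieRing.IsNilpotent (frattiniIdeal F L) :=
  LieSubalgebra.isNilpotent_of_forall_le_engel (frattiniIdeal F L : LieSubalgebra F L)
    fun _ hx => engel_eq_top_of_mem_frattiniIdeal hx ▸ le_top

lemma frattiniIdeal_le_radical [FiniteDimensional F L] :
    frattiniIdeal F L ≤ LieAlgebra.radical F L :=
  have := isNilpotent_frattiniIdeal (F := F) (L := L)
  (LieAlgebra.LieIdeal.solvable_iff_le_radical F L (frattiniIdeal F L)).mp inferInstance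

end Frattini

/-- If `L` is monolithic with monolith `A`, `L/A` is solvable and `L` is not solvable, then
the radical does not contain `A`, the Frattini ideal is zero, and some maximal subalgebra
`M` satisfies `L = M + A`. -/
theorem monolith_not_in_radical_and_phi_eq_bot {F : Type*} [Field F]
    {L : Type*} [LieRing L] [LieAlgebra F L] [FiniteDimensional F L]
    (A : LieIdeal F L) (hA : IsAtom A) (huniq : ∀ B : LieIdeal F L, IsAtom B → B = A)
    (hq : LieAlgebra.IsSolvable (L ⧸ A)) (hns : ¬ LieAlgebra.IsSolvable L) :
    ¬ A ≤ LieAlgebra.radical F L ∧ frattiniIdeal F L = ⊥ ∧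
      ∃ M : LieSubalgebra F L, IsMaximalSubalgebra M ∧
        M.toSubmodule ⊔ A.toSubmodule = ⊤ := by
  have hrad : ¬ A ≤ LieAlgebra.radical F L := fun hle =>
    have : LieAlgebra.IsSolvable A := LieAlgebra.le_solvable_ideal_solvable hle inferInstance
    hns (LieAlgebra.isSolvable_of_isSolvable_ideal_of_isSolvable_quotient A)
  have hphi : frattiniIdeal F L = ⊥ := by
    refine (eq_bot_or_exists_atom_le _).resolve_right ?_
    rintro ⟨B, hB, hBφ⟩
    exact hrad ((huniq B hB ▸ hBφ).trans frattiniIdeal_le_radical)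
  obtain ⟨M, hM, hAM⟩ :
      ∃ M : LieSubalgebra F L, IsMaximalSubalgebra M ∧ ¬ (A : Set L) ⊆ M := by
    by_contra! h
    exact hA.1 (le_bot_iff.mp (hphi ▸ le_frattiniIdeal h))
  exact ⟨hrad, hphi, M, hM, hM.toSubmodule_sup_eq_top hAM⟩
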